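/- arXiv:2508.03136 — 3 statements merged into one kernel-verified Lean document; each statement's English description precedes it below -/
import Mathlib

section
/- (Fixed points of Robust Nash-Iteration are Nash Equilibria.) Assume the multi-agent irreducibility assumption (for every deterministic joint policy d : S → A and every kernel P ∈ 𝒫, the matrix P^d is irreducible) and that each 𝒫^a_s is nonempty, compact, and convex. Suppose a product policy π, constants c_1, …, c_N ∈ ℝ, and vectors h_1, …, h_N : S → ℝ satisfy: (a) h_i(s) + c_i = ∑_a π(a|s) ( r_i(s,a) + σ_{𝒫^a_s}(h_i) ) for every i and s; and (b) for every s, π(·|s) is a Nash equilibrium of the stage game with payoffs Q_i(s,a) = r_i(s,a) + σ_{𝒫^a_s}(h_i), i.e. for every i and every μ ∈ Δ(A_i), ∑_a π(a|s) Q_i(s,a) ≥ ∑_a ( ∏_{j≠i} π_j(a_j|s) ) μ(a_i) Q_i(s,a). Then π is a Nash Equilibrium of the average-reward distributionally robust Markov game: g^{π}_{𝒫,i}(s) ≥ g^{(π_{−i}, μ_i)}_{𝒫,i}(s) for every i, every μ_i : S → Δ(A_i), and every s. -/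
open scoped BigOperators
open Matrix Filter

/-- Support function `σ_Q(V) = min_{p ∈ Q} ∑_{s'} p(s') V(s')` (as an infimum,
which is attained when `Q` is nonempty and compact). -/
noncomputable def suppF {S : Type*} [Fintype S] (Q : Set (S → ℝ)) (V : S → ℝ) : ℝ :=
  sInf ((fun p => ∑ s', p s' * V s') '' Q)

/-- The stochastic matrix `P^π` induced by a stationary policy `π` and a kernel `P`. -/
noncomputable def polMat {S A : Type*} [Fintype S] [Fintype A]
    (π : S → A → ℝ) (P : S → A → S → ℝ) : Matrix S S ℝ :=
  Matrix.of fun s s' => ∑ a, π s a * P s a s'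

/-- The reward vector `r^π`. -/
noncomputable def polRew {S A : Type*} [Fintype A]
    (π : S → A → ℝ) (r : S → A → ℝ) : S → ℝ :=
  fun s => ∑ a, π s a * r s a

/-- The average reward `g^π_P(s) = liminf_n (1/n) ∑_{t<n} ((P^π)^t r^π)(s)`. -/
noncomputable def avgR {S A : Type*} [Fintype S] [DecidableEq S] [Fintype A]
    (π : S → A → ℝ) (P : S → A → S → ℝ) (r : S → A → ℝ) (s : S) : ℝ :=
  Filter.liminf
    (fun n : ℕ => (∑ t ∈ Finset.range n, ((polMat π P ^ t) *ᵥ polRew π r) s) / n)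
    Filter.atTop

/-- The robust average reward `g^π_U(s) = inf_{P ∈ U} g^π_P(s)`. -/
noncomputable def robAvgR {S A : Type*} [Fintype S] [DecidableEq S] [Fintype A]
    (U : S → A → Set (S → ℝ)) (π : S → A → ℝ) (r : S → A → ℝ) (s : S) : ℝ :=
  sInf {x | ∃ P : S → A → S → ℝ, (∀ s' a, P s' a ∈ U s' a) ∧ x = avgR π P r s}

/-- A stochastic matrix is irreducible: all states communicate. -/
def IrredM {S : Type*} [Fintype S] [DecidableEq S] (M : Matrix S S ℝ) : Prop :=
  ∀ s s' : S, ∃ k : ℕ, 1 ≤ k ∧ 0 < (M ^ k) s s'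

/-- Assumption 1: for every deterministic policy `d` and every kernel `P ∈ U`,
the matrix `P^d` is irreducible. -/
def Assump1 {S A : Type*} [Fintype S] [DecidableEq S]
    (U : S → A → Set (S → ℝ)) : Prop :=
  ∀ (d : S → A) (P : S → A → S → ℝ), (∀ s a, P s a ∈ U s a) →
    IrredM (Matrix.of fun s s' => P s (d s) s')

/-- The joint policy `π(a|s) = ∏ i π_i(a_i|s)` of a product policy. -/
noncomputable def jointPol {S : Type*} {N : ℕ} {A : Fin N → Type*}
    (π : ∀ i, S → A i → ℝ) : S → (∀ i, A i) → ℝ :=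
  fun s a => ∏ i, π i s (a i)

/-! Fix agent `i` and put `Q(s,a) = r_i(s,a) + σ_{U^a_s}(h_i)`. Since `σ_{U^a_s}(h_i) ≤ P^a_s h_i`
for every `P ∈ U`, the fixed-point equation gives `c_i + h_i ≤ r^π + P^π h_i` for every admissible
kernel. For a deviation `π' = (π_{-i}, μ)`, the stage-game condition gives
`∑_a π'(a|s) Q(s,a) ≤ c_i + h_i(s)`, and a kernel `P*` attaining every support function turns this
into `r^{π'} + P*^{π'} h_i ≤ c_i + h_i`. For a stochastic matrix `M`, a relation
`r + M h = c + h + e` telescopes to `∑_{t<n} M^t r = n c + h - M^n h + ∑_{t<n} M^t e`, and `h` is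
bounded, so the sign of `e` bounds the Cesàro averages of `r` by `c ± 2‖h‖/n`. Hence
`g^{π'}_{P*} ≤ c_i ≤ g^π_P` for every admissible `P`.
-/

open Finset

lemma le_liminf_of_eventually_sub_div_le {u : ℕ → ℝ} {c d : ℝ}
    (hu : ∀ᶠ n : ℕ in atTop, c - d / n ≤ u n) (hbdd : IsCoboundedUnder (· ≥ ·) atTop u) :
    c ≤ liminf u atTop := by
  have hlim : Tendsto (fun n : ℕ => c - d / n) atTop (nhds c) := by
    simpa using (tendsto_const_div_atTop_nhds_zero_nat d).const_sub c
  exact hlim.liminf_eq ▸ liminf_le_liminf hu hlim.isBoundedUnder_ge hbdd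

lemma liminf_le_of_eventually_le_add_div {u : ℕ → ℝ} {c d : ℝ}
    (hu : ∀ᶠ n : ℕ in atTop, u n ≤ c + d / n) (hbdd : IsBoundedUnder (· ≥ ·) atTop u) :
    liminf u atTop ≤ c := by
  have hlim : Tendsto (fun n : ℕ => c + d / n) atTop (nhds c) := by
    simpa using (tendsto_const_div_atTop_nhds_zero_nat d).const_add c
  exact hlim.liminf_eq ▸ liminf_le_liminf hu hbdd hlim.isCoboundedUnder_ge

namespace Matrix

variable {S : Type*} [Fintype S] [DecidableEq S] {M : Matrix S S ℝ}

lemma mulVec_mono_of_mem_rowStochastic (hM : M ∈ rowStochastic ℝ S) {u v : S → ℝ}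
    (huv : u ≤ v) : M *ᵥ u ≤ M *ᵥ v := by
  have := nonneg_mulVec_of_mem_rowStochastic hM (x := v - u) fun s => sub_nonneg.2 (huv s)
  intro s
  simpa [mulVec_sub] using this s

lemma mulVec_smul_one_of_mem_rowStochastic (hM : M ∈ rowStochastic ℝ S) (c : ℝ) :
    M *ᵥ (c • 1) = c • 1 := by
  rw [mulVec_smul, one_vecMul_of_mem_rowStochastic hM]

lemma abs_mulVec_le_norm_of_mem_rowStochastic (hM : M ∈ rowStochastic ℝ S) (u : S → ℝ)
    (s : S) : |(M *ᵥ u) s| ≤ ‖u‖ := by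
  have hu : ∀ s, |u s| ≤ ‖u‖ := fun s => by simpa using norm_le_pi_norm u s
  have lower := mulVec_mono_of_mem_rowStochastic hM (u := -‖u‖ • 1) (v := u)
    fun s => by simpa using neg_abs_le (u s) |>.trans' (neg_le_neg (hu s))
  have upper := mulVec_mono_of_mem_rowStochastic hM (u := u) (v := ‖u‖ • 1)
    fun s => by simpa using (le_abs_self (u s)).trans (hu s)
  rw [mulVec_smul_one_of_mem_rowStochastic hM] at lower upper
  exact abs_le.2 ⟨by simpa using lower s, by simpa using upper s⟩

lemma sum_pow_mulVec_eq_of_defect (hM : M ∈ rowStochastic ℝ S) {r h e : S → ℝ} {c : ℝ}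
    (he : r + M *ᵥ h = c • 1 + h + e) (n : ℕ) :
    ∑ t ∈ range n, M ^ t *ᵥ r = (n * c) • 1 + h - M ^ n *ᵥ h + ∑ t ∈ range n, M ^ t *ᵥ e := by
  induction n with
  | zero => simp
  | succ n ih =>
    have step : M ^ n *ᵥ r + M ^ (n + 1) *ᵥ h = c • 1 + M ^ n *ᵥ h + M ^ n *ᵥ e := by
      rw [pow_succ, ← mulVec_mulVec, ← mulVec_add, he, mulVec_add, mulVec_add,
        mulVec_smul_one_of_mem_rowStochastic (pow_mem hM n)]
    rw [sum_range_succ, sum_range_succ, ih, Nat.cast_succ, add_mul, one_mul, add_smul]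
    rw [← sub_eq_iff_eq_add'] at step
    rw [← step]
    abel

/-- `avgR π P r s` is `liminf (cesaroAvg (polMat π P) (polRew π r) s) atTop`. -/
noncomputable def cesaroAvg (M : Matrix S S ℝ) (r : S → ℝ) (s : S) (n : ℕ) : ℝ :=
  (∑ t ∈ range n, (M ^ t *ᵥ r) s) / n

lemma cesaroAvg_nonneg (hM : M ∈ rowStochastic ℝ S) {r : S → ℝ} (hr : 0 ≤ r) (s : S)
    (n : ℕ) : 0 ≤ cesaroAvg M r s n :=
  div_nonneg (sum_nonneg fun t _ => nonneg_mulVec_of_mem_rowStochastic (pow_mem hM t) hr s)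
    n.cast_nonneg

lemma cesaroAvg_le_one (hM : M ∈ rowStochastic ℝ S) {r : S → ℝ} (hr : r ≤ 1) (s : S)
    (n : ℕ) : cesaroAvg M r s n ≤ 1 := by
  refine div_le_one_of_le₀ ?_ n.cast_nonneg
  calc ∑ t ∈ range n, (M ^ t *ᵥ r) s ≤ ∑ t ∈ range n, (1 : ℝ) := by
        gcongr with t
        have := mulVec_mono_of_mem_rowStochastic (pow_mem hM t) hr s
        rwa [one_vecMul_of_mem_rowStochastic (pow_mem hM t)] at this
    _ = n := by simp

lemma cesaroAvg_eq_of_defect (hM : M ∈ rowStochastic ℝ S) {r h e : S → ℝ} {c : ℝ}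
    (he : r + M *ᵥ h = c • 1 + h + e) (s : S) {n : ℕ} (hn : 0 < n) :
    cesaroAvg M r s n = c + (h s - (M ^ n *ᵥ h) s + ∑ t ∈ range n, (M ^ t *ᵥ e) s) / n := by
  have hsum := congrFun (sum_pow_mulVec_eq_of_defect hM he n) s
  simp only [Finset.sum_apply, Pi.add_apply, Pi.sub_apply, Pi.smul_apply, Pi.one_apply,
    smul_eq_mul, mul_one] at hsum
  rw [cesaroAvg, hsum]
  field_simp
  ring

lemma sub_le_cesaroAvg (hM : M ∈ rowStochastic ℝ S) {r h : S → ℝ} {c : ℝ}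
    (hbel : c • 1 + h ≤ r + M *ᵥ h) (s : S) {n : ℕ} (hn : 0 < n) :
    c - 2 * ‖h‖ / n ≤ cesaroAvg M r s n := by
  set e := r + M *ᵥ h - (c • 1 + h)
  have he : r + M *ᵥ h = c • 1 + h + e := (add_sub_cancel _ _).symm
  have hsum : 0 ≤ ∑ t ∈ range n, (M ^ t *ᵥ e) s := sum_nonneg fun t _ =>
    nonneg_mulVec_of_mem_rowStochastic (pow_mem hM t) (fun s => sub_nonneg.2 (hbel s)) s
  have hh : |h s| ≤ ‖h‖ := by simpa using norm_le_pi_norm h s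
  have hMh := abs_mulVec_le_norm_of_mem_rowStochastic (pow_mem hM n) h s
  rw [cesaroAvg_eq_of_defect hM he s hn, sub_eq_add_neg, ← neg_div]
  gcongr
  linarith [neg_abs_le (h s), le_abs_self ((M ^ n *ᵥ h) s)]

lemma cesaroAvg_le_add (hM : M ∈ rowStochastic ℝ S) {r h : S → ℝ} {c : ℝ}
    (hbel : r + M *ᵥ h ≤ c • 1 + h) (s : S) {n : ℕ} (hn : 0 < n) :
    cesaroAvg M r s n ≤ c + 2 * ‖h‖ / n := by
  set e := r + M *ᵥ h - (c • 1 + h)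
  have he : r + M *ᵥ h = c • 1 + h + e := (add_sub_cancel _ _).symm
  have hsum : ∑ t ∈ range n, (M ^ t *ᵥ e) s ≤ 0 := sum_nonpos fun t _ => by
    have := nonneg_mulVec_of_mem_rowStochastic (pow_mem hM t) (x := -e)
      (fun s => by simpa [e] using hbel s) s
    simpa [mulVec_neg] using this
  have hh : |h s| ≤ ‖h‖ := by simpa using norm_le_pi_norm h s
  have hMh := abs_mulVec_le_norm_of_mem_rowStochastic (pow_mem hM n) h s
  rw [cesaroAvg_eq_of_defect hM he s hn]
  gcongr
  linarith [le_abs_self (h s), neg_abs_le ((M ^ n *ᵥ h) s)]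

lemma le_liminf_cesaroAvg (hM : M ∈ rowStochastic ℝ S) {r h : S → ℝ} {c : ℝ}
    (hbel : c • 1 + h ≤ r + M *ᵥ h) (hr : r ≤ 1) (s : S) :
    c ≤ liminf (cesaroAvg M r s) atTop :=
  le_liminf_of_eventually_sub_div_le
    (eventually_atTop.2 ⟨1, fun _ hn => sub_le_cesaroAvg hM hbel s hn⟩)
    (isCoboundedUnder_ge_of_le atTop (cesaroAvg_le_one hM hr s))

lemma liminf_cesaroAvg_le (hM : M ∈ rowStochastic ℝ S) {r h : S → ℝ} {c : ℝ}
    (hbel : r + M *ᵥ h ≤ c • 1 + h) (hr : 0 ≤ r) (s : S) :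
    liminf (cesaroAvg M r s) atTop ≤ c :=
  liminf_le_of_eventually_le_add_div
    (eventually_atTop.2 ⟨1, fun _ hn => cesaroAvg_le_add hM hbel s hn⟩)
    (isBoundedUnder_of ⟨0, cesaroAvg_nonneg hM hr s⟩)

end Matrix

section AverageReward

variable {S A : Type*} [Fintype A] {π : S → A → ℝ} {P : S → A → S → ℝ} {r : S → A → ℝ}

lemma polRew_nonneg (hπ : ∀ s, π s ∈ stdSimplex ℝ A) (hr : ∀ s a, 0 ≤ r s a) :
    0 ≤ polRew π r :=
  fun s => sum_nonneg fun a _ => mul_nonneg ((hπ s).1 a) (hr s a)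

lemma polRew_le_one (hπ : ∀ s, π s ∈ stdSimplex ℝ A) (hr : ∀ s a, r s a ≤ 1) :
    polRew π r ≤ 1 := fun s =>
  calc ∑ a, π s a * r s a ≤ ∑ a, π s a := by
        gcongr with a
        exact mul_le_of_le_one_right ((hπ s).1 a) (hr s a)
    _ = 1 := (hπ s).2

variable [Fintype S]

lemma polRew_add_polMat_mulVec_apply (π : S → A → ℝ) (P : S → A → S → ℝ) (r : S → A → ℝ)
    (V : S → ℝ) (s : S) :
    (polRew π r + polMat π P *ᵥ V) s = ∑ a, π s a * (r s a + ∑ s', P s a s' * V s') := by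
  simp only [Pi.add_apply, polRew, polMat, mulVec, dotProduct, of_apply, sum_mul, mul_add,
    mul_sum, sum_add_distrib]
  rw [sum_comm (γ := S)]
  simp only [mul_assoc]

variable [DecidableEq S]

lemma polMat_mem_rowStochastic (hπ : ∀ s, π s ∈ stdSimplex ℝ A)
    (hP : ∀ s a, P s a ∈ stdSimplex ℝ S) : polMat π P ∈ rowStochastic ℝ S := by
  refine mem_rowStochastic_iff_sum.2 ⟨fun s s' => ?_, fun s => ?_⟩
  · exact sum_nonneg fun a _ => mul_nonneg ((hπ s).1 a) ((hP s a).1 s')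
  · simp only [polMat, of_apply]
    rw [sum_comm]
    simp only [← mul_sum, (hP s _).2, mul_one, (hπ s).2]

lemma le_avgR_of_bellman (hπ : ∀ s, π s ∈ stdSimplex ℝ A) (hP : ∀ s a, P s a ∈ stdSimplex ℝ S)
    (hr : ∀ s a, r s a ≤ 1) {V : S → ℝ} {c : ℝ}
    (hbel : ∀ s, c + V s ≤ ∑ a, π s a * (r s a + ∑ s', P s a s' * V s')) (s : S) :
    c ≤ avgR π P r s :=
  Matrix.le_liminf_cesaroAvg (polMat_mem_rowStochastic hπ hP) (h := V)
    (fun s => by rw [polRew_add_polMat_mulVec_apply]; simpa using hbel s) (polRew_le_one hπ hr) s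

lemma avgR_le_of_bellman (hπ : ∀ s, π s ∈ stdSimplex ℝ A) (hP : ∀ s a, P s a ∈ stdSimplex ℝ S)
    (hr : ∀ s a, 0 ≤ r s a) {V : S → ℝ} {c : ℝ}
    (hbel : ∀ s, ∑ a, π s a * (r s a + ∑ s', P s a s' * V s') ≤ c + V s) (s : S) :
    avgR π P r s ≤ c :=
  Matrix.liminf_cesaroAvg_le (polMat_mem_rowStochastic hπ hP) (h := V)
    (fun s => by rw [polRew_add_polMat_mulVec_apply]; simpa using hbel s) (polRew_nonneg hπ hr) s

lemma avgR_nonneg (hπ : ∀ s, π s ∈ stdSimplex ℝ A) (hP : ∀ s a, P s a ∈ stdSimplex ℝ S)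
    (hr : ∀ s a, r s a ∈ Set.Icc (0 : ℝ) 1) (s : S) : 0 ≤ avgR π P r s :=
  le_avgR_of_bellman (V := 0) hπ hP (fun s a => (hr s a).2)
    (fun s => by simpa using sum_nonneg fun a _ => mul_nonneg ((hπ s).1 a) (hr s a).1) s

end AverageReward

section Robust

variable {S A : Type*} [Fintype S]

lemma suppF_le_of_mem {Q : Set (S → ℝ)} (hQ : IsCompact Q) {p : S → ℝ} (hp : p ∈ Q)
    (V : S → ℝ) : suppF Q V ≤ ∑ s', p s' * V s' :=
  csInf_le (hQ.bddBelow_image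
    (by fun_prop : Continuous fun p : S → ℝ => ∑ s', p s' * V s').continuousOn) ⟨p, hp, rfl⟩

lemma exists_mem_suppF_eq {Q : Set (S → ℝ)} (hne : Q.Nonempty) (hQ : IsCompact Q)
    (V : S → ℝ) : ∃ p ∈ Q, ∑ s', p s' * V s' = suppF Q V :=
  (hQ.image (by fun_prop : Continuous fun p : S → ℝ => ∑ s', p s' * V s')).sInf_mem
    (hne.image _)

variable [DecidableEq S] [Fintype A] {U : S → A → Set (S → ℝ)} {π : S → A → ℝ}
  {r : S → A → ℝ} {V : S → ℝ} {c : ℝ}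

lemma le_robAvgR_of_bellman (hne : ∀ s a, (U s a).Nonempty) (hcpt : ∀ s a, IsCompact (U s a))
    (hsimp : ∀ s a, U s a ⊆ stdSimplex ℝ S) (hπ : ∀ s, π s ∈ stdSimplex ℝ A)
    (hr : ∀ s a, r s a ≤ 1) (hbel : ∀ s, c + V s ≤ ∑ a, π s a * (r s a + suppF (U s a) V))
    (s : S) : c ≤ robAvgR U π r s := by
  choose P₀ hP₀ using hne
  refine le_csInf ⟨_, P₀, hP₀, rfl⟩ ?_
  rintro _ ⟨P, hPU, rfl⟩
  refine le_avgR_of_bellman (V := V) hπ (fun s a => hsimp s a (hPU s a)) hr (fun s => ?_) s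
  refine (hbel s).trans (sum_le_sum fun a _ => ?_)
  gcongr
  · exact (hπ s).1 a
  · exact suppF_le_of_mem (hcpt s a) (hPU s a) V

lemma robAvgR_le_of_bellman (hne : ∀ s a, (U s a).Nonempty) (hcpt : ∀ s a, IsCompact (U s a))
    (hsimp : ∀ s a, U s a ⊆ stdSimplex ℝ S) (hπ : ∀ s, π s ∈ stdSimplex ℝ A)
    (hr : ∀ s a, r s a ∈ Set.Icc (0 : ℝ) 1)
    (hbel : ∀ s, ∑ a, π s a * (r s a + suppF (U s a) V) ≤ c + V s) (s : S) :
    robAvgR U π r s ≤ c := by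
  choose P hPU hPeq using fun s a => exists_mem_suppF_eq (hne s a) (hcpt s a) V
  have hbdd : BddBelow {x | ∃ P : S → A → S → ℝ, (∀ s a, P s a ∈ U s a) ∧ x = avgR π P r s} := by
    refine ⟨0, ?_⟩
    rintro _ ⟨P, hPU, rfl⟩
    exact avgR_nonneg hπ (fun s a => hsimp s a (hPU s a)) hr s
  refine (csInf_le hbdd ⟨P, hPU, rfl⟩).trans ?_
  exact avgR_le_of_bellman (V := V) hπ (fun s a => hsimp s a (hPU s a)) (fun s a => (hr s a).1)
    (fun s => by simpa only [hPeq] using hbel s) s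

end Robust

section ProductPolicy

variable {S : Type*} {N : ℕ} {A : Fin N → Type*}

lemma jointPol_update_apply (π : ∀ i, S → A i → ℝ) (i : Fin N) (μ : S → A i → ℝ) (s : S)
    (a : ∀ j, A j) :
    jointPol (Function.update π i μ) s a = (∏ j ∈ univ.erase i, π j s (a j)) * μ s (a i) := by
  rw [jointPol, ← mul_prod_erase univ _ (mem_univ i), mul_comm, Function.update_self]
  congr 1
  exact prod_congr rfl fun j hj => by rw [Function.update_of_ne (ne_of_mem_erase hj)]

variable [∀ i, Fintype (A i)] {π : ∀ i, S → A i → ℝ}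

lemma jointPol_mem_stdSimplex (hπ : ∀ i s, π i s ∈ stdSimplex ℝ (A i)) (s : S) :
    jointPol π s ∈ stdSimplex ℝ (∀ i, A i) := by
  refine ⟨fun a => prod_nonneg fun i _ => (hπ i s).1 (a i), ?_⟩
  simp only [jointPol, ← Fintype.prod_sum, (hπ _ s).2, prod_const_one]

lemma update_mem_stdSimplex (hπ : ∀ i s, π i s ∈ stdSimplex ℝ (A i)) {i : Fin N}
    {μ : S → A i → ℝ} (hμ : ∀ s, μ s ∈ stdSimplex ℝ (A i)) (j : Fin N) (s : S) :
    Function.update π i μ j s ∈ stdSimplex ℝ (A j) := by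
  rcases eq_or_ne j i with rfl | hj
  · simpa using hμ s
  · simpa [Function.update_of_ne hj] using hπ j s

end ProductPolicy

theorem stmt13_general {S : Type*} [Fintype S] [DecidableEq S]
    {N : ℕ} (A : Fin N → Type*) [∀ i, Fintype (A i)]
    (r : Fin N → S → (∀ i, A i) → ℝ)
    (hr : ∀ i s a, r i s a ∈ Set.Icc (0 : ℝ) 1)
    (U : S → (∀ i, A i) → Set (S → ℝ))
    (hU : ∀ s a, (U s a).Nonempty ∧ IsCompact (U s a) ∧ Convex ℝ (U s a) ∧
      U s a ⊆ stdSimplex ℝ S)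
    (π : ∀ i, S → A i → ℝ) (hπ : ∀ i s, π i s ∈ stdSimplex ℝ (A i))
    (c : Fin N → ℝ) (h : Fin N → S → ℝ)
    (hfix : ∀ i s, h i s + c i
      = ∑ a : (∀ j, A j), jointPol π s a * (r i s a + suppF (U s a) (h i)))
    (hstage : ∀ (s : S) (i : Fin N) (μ : A i → ℝ), μ ∈ stdSimplex ℝ (A i) →
      ∑ a : (∀ j, A j), jointPol π s a * (r i s a + suppF (U s a) (h i))
        ≥ ∑ a : (∀ j, A j),
            ((∏ j ∈ Finset.univ.erase i, π j s (a j)) * μ (a i))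
              * (r i s a + suppF (U s a) (h i))) :
    ∀ (i : Fin N) (μ : S → A i → ℝ), (∀ s, μ s ∈ stdSimplex ℝ (A i)) →
      ∀ s, robAvgR U (jointPol (Function.update π i μ)) (r i) s
        ≤ robAvgR U (jointPol π) (r i) s := by
  intro i μ hμ s
  have hne s a := (hU s a).1
  have hcpt s a := (hU s a).2.1
  have hsimp s a := (hU s a).2.2.2
  have hdeviation s : ∑ a, jointPol (Function.update π i μ) s a
      * (r i s a + suppF (U s a) (h i)) ≤ c i + h i s := by
    simp only [jointPol_update_apply]
    linarith [hstage s i (μ s) (hμ s), hfix i s]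
  calc robAvgR U (jointPol (Function.update π i μ)) (r i) s ≤ c i :=
        robAvgR_le_of_bellman hne hcpt hsimp
          (jointPol_mem_stdSimplex (update_mem_stdSimplex hπ hμ)) (hr i) hdeviation s
    _ ≤ robAvgR U (jointPol π) (r i) s :=
        le_robAvgR_of_bellman hne hcpt hsimp (jointPol_mem_stdSimplex hπ)
          (fun s a => (hr i s a).2) (fun s => by rw [add_comm, hfix]) s

/-- **Fixed points of Robust Nash-Iteration are Nash Equilibria.**
If a product policy `π`, constants `c_i`, and vectors `h_i` satisfy the robust
Bellman fixed-point equations and `π(·|s)` is a Nash equilibrium of every stage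
game with payoffs `Q_i(s,a) = r_i(s,a) + σ_{U^a_s}(h_i)`, then `π` is a Nash
Equilibrium of the average-reward distributionally robust Markov game. -/
theorem stmt13 {S : Type*} [Fintype S] [DecidableEq S] [Nonempty S]
    {N : ℕ} (A : Fin N → Type*) [∀ i, Fintype (A i)] [∀ i, Nonempty (A i)]
    (r : Fin N → S → (∀ i, A i) → ℝ)
    (hr : ∀ i s a, r i s a ∈ Set.Icc (0 : ℝ) 1)
    (U : S → (∀ i, A i) → Set (S → ℝ))
    (hU : ∀ s a, (U s a).Nonempty ∧ IsCompact (U s a) ∧ Convex ℝ (U s a) ∧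
      U s a ⊆ stdSimplex ℝ S)
    (hirr : Assump1 U)
    (π : ∀ i, S → A i → ℝ) (hπ : ∀ i s, π i s ∈ stdSimplex ℝ (A i))
    (c : Fin N → ℝ) (h : Fin N → S → ℝ)
    (hfix : ∀ i s, h i s + c i
      = ∑ a : (∀ j, A j), jointPol π s a * (r i s a + suppF (U s a) (h i)))
    (hstage : ∀ (s : S) (i : Fin N) (μ : A i → ℝ), μ ∈ stdSimplex ℝ (A i) →
      ∑ a : (∀ j, A j), jointPol π s a * (r i s a + suppF (U s a) (h i))
        ≥ ∑ a : (∀ j, A j),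
            ((∏ j ∈ Finset.univ.erase i, π j s (a j)) * μ (a i))
              * (r i s a + suppF (U s a) (h i))) :
    ∀ (i : Fin N) (μ : S → A i → ℝ), (∀ s, μ s ∈ stdSimplex ℝ (A i)) →
      ∀ s, robAvgR U (jointPol (Function.update π i μ)) (r i) s
        ≤ robAvgR U (jointPol π) (r i) s :=
  stmt13_general A r hr U hU π hπ c h hfix hstage
end

section
/- For any stochastic matrix P on a finite nonempty set S (each row of P lies in Δ(S)) and any vector V : S → ℝ, the span seminorm contracts by the ergodicity coefficient: sp(PV) ≤ (1 − α(P)) · sp(V), where sp(V) = max_s V(s) − min_s V(s) and α(P) = 1 − (1/2) max_{i,j ∈ S} ∑_{k ∈ S} |P_{ik} − P_{jk}|. -/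
/-!
Fix two rows `i, j` of `P`. Their difference `d = P i - P j` sums to zero, so `d ⬝ᵥ V` does not
change when `V` is shifted by the midpoint `c` of its range, and `|V k - c| ≤ sp(V) / 2`. Hence
`(P V)(i) - (P V)(j) = d ⬝ᵥ (V - c) ≤ (∑ₖ |d k|) sp(V) / 2`, and `(1 - α(P)) sp(V)` is the maximum of
the right-hand side over all pairs of rows.
-/

open Matrix

/-- Span seminorm `sp(V) = max_s V(s) − min_s V(s)`. -/
noncomputable def spanSemi {S : Type*} [Fintype S] [Nonempty S] (V : S → ℝ) : ℝ :=
  (⨆ s, V s) - ⨅ s, V s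

/-- Ergodicity coefficient `α(P) = 1 − (1/2) max_{i,j} ∑_k |P_{ik} − P_{jk}|`. -/
noncomputable def ergCoeff {S : Type*} [Fintype S] [Nonempty S] (P : Matrix S S ℝ) : ℝ :=
  1 - (1 / 2) * ⨆ p : S × S, ∑ k, |P p.1 k - P p.2 k|

open Finset

lemma dotProduct_le_of_sum_eq_zero {ι : Type*} [Fintype ι] {d V : ι → ℝ} {m M : ℝ}
    (hd : ∑ k, d k = 0) (hm : ∀ k, m ≤ V k) (hM : ∀ k, V k ≤ M) :
    d ⬝ᵥ V ≤ (∑ k, |d k|) * (M - m) / 2 := by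
  set c := (M + m) / 2 with hc
  have hshift : d ⬝ᵥ V = ∑ k, d k * (V k - c) := by
    simp only [dotProduct, mul_sub, sum_sub_distrib, ← sum_mul, hd, zero_mul, sub_zero]
  have hdist (k : ι) : |V k - c| ≤ (M - m) / 2 :=
    abs_sub_le_iff.2 ⟨by linarith [hM k, hc], by linarith [hm k, hc]⟩
  calc d ⬝ᵥ V = ∑ k, d k * (V k - c) := hshift
    _ ≤ ∑ k, |d k| * ((M - m) / 2) := sum_le_sum fun k _ =>
        calc d k * (V k - c) ≤ |d k| * |V k - c| := (le_abs_self _).trans (abs_mul _ _).le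
          _ ≤ |d k| * ((M - m) / 2) := mul_le_mul_of_nonneg_left (hdist k) (abs_nonneg _)
    _ = (∑ k, |d k|) * (M - m) / 2 := by rw [← sum_mul]; ring

section spanSemi

variable {S : Type*} [Fintype S] [Nonempty S]

lemma spanSemi_nonneg (V : S → ℝ) : 0 ≤ spanSemi V := by
  obtain ⟨s⟩ := ‹Nonempty S›
  have := (ciInf_le (Finite.bddBelow_range V) s).trans (le_ciSup (Finite.bddAbove_range V) s)
  rw [spanSemi]
  linarith

lemma spanSemi_le_of_forall_sub_le {W : S → ℝ} {c : ℝ} (h : ∀ i j, W i - W j ≤ c) :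
    spanSemi W ≤ c := by
  have hinf (i : S) : W i - c ≤ ⨅ j, W j := le_ciInf fun j => by linarith [h i j]
  have hsup : (⨆ i, W i) ≤ c + ⨅ j, W j := ciSup_le fun i => by linarith [hinf i]
  rw [spanSemi]
  linarith

end spanSemi

/-- For any stochastic matrix `P` and vector `V`,
`sp(PV) ≤ (1 − α(P)) sp(V)`. -/
theorem stmt17 {S : Type*} [Fintype S] [Nonempty S]
    (P : Matrix S S ℝ) (hP : ∀ i, P i ∈ stdSimplex ℝ S)
    (V : S → ℝ) :
    spanSemi (P *ᵥ V) ≤ (1 - ergCoeff P) * spanSemi V := by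
  have hspan := spanSemi_nonneg V
  refine spanSemi_le_of_forall_sub_le fun i j => ?_
  have hrow : ∑ k, (P i - P j) k = 0 := by
    simp only [Pi.sub_apply, sum_sub_distrib, (hP i).2, (hP j).2, sub_self]
  calc (P *ᵥ V) i - (P *ᵥ V) j = (P i - P j) ⬝ᵥ V := (sub_dotProduct _ _ _).symm
    _ ≤ (∑ k, |(P i - P j) k|) * spanSemi V / 2 :=
        dotProduct_le_of_sum_eq_zero hrow (ciInf_le (Finite.bddBelow_range V))
          (le_ciSup (Finite.bddAbove_range V))
    _ ≤ (⨆ p : S × S, ∑ k, |P p.1 k - P p.2 k|) * spanSemi V / 2 := by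
        gcongr
        exact le_ciSup (f := fun p : S × S => ∑ k, |P p.1 k - P p.2 k|)
          (Finite.bddAbove_range _) (i, j)
    _ = (1 - ergCoeff P) * spanSemi V := by rw [ergCoeff]; ring
end

section
/- (Difference of robust operators.) Let S and A be finite nonempty sets and for each (s,a) let 𝒫^a_s ⊆ Δ(S) be nonempty, compact, and convex. Then for any V₁, V₂ : S → ℝ and each (s,a), there exists p*_{s,a} ∈ 𝒫^a_s such that σ_{𝒫^a_s}(V₁) − σ_{𝒫^a_s}(V₂) = ∑_{s'} p*_{s,a}(s') (V₁(s') − V₂(s')). Consequently, for any policy π : S → Δ(A), the stochastic matrix P* with entries P*_{s,s'} = ∑_a π(a|s) p*_{s,a}(s') satisfies σ^π(V₁)(s) − σ^π(V₂)(s) = (P*(V₁ − V₂))(s) for every s, where σ^π(V)(s) = ∑_a π(a|s) σ_{𝒫^a_s}(V). -/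
open scoped BigOperators

/-!
Minimisers `p₁` of `p ↦ p ⬝ᵥ V₁` and `p₂` of `p ↦ p ⬝ᵥ V₂` over `Q` give
`p₁ ⬝ᵥ (V₁ - V₂) ≤ σ_Q(V₁) - σ_Q(V₂) ≤ p₂ ⬝ᵥ (V₁ - V₂)`, so by the intermediate value theorem on
the connected set `Q` some `p* ∈ Q` realises the difference exactly. Averaging over actions with
the weights `π(·|s)` is linear, which turns the pointwise identities into `P* (V₁ - V₂)`.
-/

open Matrix

section SupportFunction

variable {S : Type*} [Fintype S] {Q : Set (S → ℝ)}

theorem suppF_eq_sInf_dotProduct (Q : Set (S → ℝ)) (V : S → ℝ) :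
    suppF Q V = sInf ((· ⬝ᵥ V) '' Q) :=
  rfl

theorem isLeast_suppF (hne : Q.Nonempty) (hc : IsCompact Q) (V : S → ℝ) :
    IsLeast ((· ⬝ᵥ V) '' Q) (suppF Q V) := by
  have hcont : Continuous (· ⬝ᵥ V : (S → ℝ) → ℝ) := by fun_prop
  obtain ⟨m, hm⟩ := (hc.image hcont).exists_isLeast (hne.image _)
  rwa [suppF_eq_sInf_dotProduct, hm.csInf_eq]

theorem exists_mem_suppF_sub_suppF_eq (hne : Q.Nonempty) (hc : IsCompact Q)
    (hconv : Convex ℝ Q) (V₁ V₂ : S → ℝ) :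
    ∃ p ∈ Q, suppF Q V₁ - suppF Q V₂ = p ⬝ᵥ (V₁ - V₂) := by
  obtain ⟨⟨p₁, hp₁, he₁ : p₁ ⬝ᵥ V₁ = suppF Q V₁⟩, hle₁⟩ := isLeast_suppF hne hc V₁
  obtain ⟨⟨p₂, hp₂, he₂ : p₂ ⬝ᵥ V₂ = suppF Q V₂⟩, hle₂⟩ := isLeast_suppF hne hc V₂
  have hp₁V₂ : suppF Q V₂ ≤ p₁ ⬝ᵥ V₂ := hle₂ ⟨p₁, hp₁, rfl⟩
  have hp₂V₁ : suppF Q V₁ ≤ p₂ ⬝ᵥ V₁ := hle₁ ⟨p₂, hp₂, rfl⟩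
  have hcont : Continuous (· ⬝ᵥ (V₁ - V₂) : (S → ℝ) → ℝ) := by fun_prop
  obtain ⟨p, hp, hval⟩ := hconv.isPreconnected.intermediate_value₂ hp₁ hp₂
    hcont.continuousOn continuousOn_const (g := fun _ => suppF Q V₁ - suppF Q V₂)
    (by rw [dotProduct_sub, he₁]; linarith) (by rw [dotProduct_sub, he₂]; linarith)
  exact ⟨p, hp, hval.symm⟩

end SupportFunction

theorem stmt18_general {S A : Type*} [Fintype S] [Fintype A]
    (U : S → A → Set (S → ℝ))
    (hU : ∀ s a, (U s a).Nonempty ∧ IsCompact (U s a) ∧ Convex ℝ (U s a) ∧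
      U s a ⊆ stdSimplex ℝ S)
    (V₁ V₂ : S → ℝ) :
    ∃ pstar : S → A → (S → ℝ),
      (∀ s a, pstar s a ∈ U s a) ∧
      (∀ s a, suppF (U s a) V₁ - suppF (U s a) V₂
        = ∑ s', pstar s a s' * (V₁ s' - V₂ s')) ∧
      (∀ π : S → A → ℝ, (∀ s, π s ∈ stdSimplex ℝ A) → ∀ s,
        (∑ a, π s a * suppF (U s a) V₁) - (∑ a, π s a * suppF (U s a) V₂)
          = ∑ s', (∑ a, π s a * pstar s a s') * (V₁ s' - V₂ s')) := by
  choose pstar hmem hval using fun s a =>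
    exists_mem_suppF_sub_suppF_eq (hU s a).1 (hU s a).2.1 (hU s a).2.2.1 V₁ V₂
  refine ⟨pstar, hmem, hval, fun π _ s => ?_⟩
  have hdiff : (fun a => suppF (U s a) V₁) - (fun a => suppF (U s a) V₂)
      = pstar s *ᵥ (V₁ - V₂) :=
    funext (hval s)
  calc (∑ a, π s a * suppF (U s a) V₁) - (∑ a, π s a * suppF (U s a) V₂)
      = π s ⬝ᵥ (pstar s *ᵥ (V₁ - V₂)) := by rw [← hdiff, dotProduct_sub]; rfl
    _ = (π s ᵥ* pstar s) ⬝ᵥ (V₁ - V₂) := dotProduct_mulVec _ _ _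

/-- **Difference of robust operators.** For nonempty compact
convex uncertainty sets, the difference of support functions at `V₁` and `V₂`
is realized by some kernel: pointwise by some `p*_{s,a} ∈ U^a_s`, and, for a
policy `π`, by the induced stochastic matrix `P*`. -/
theorem stmt18 {S A : Type*} [Fintype S] [Nonempty S] [Fintype A] [Nonempty A]
    (U : S → A → Set (S → ℝ))
    (hU : ∀ s a, (U s a).Nonempty ∧ IsCompact (U s a) ∧ Convex ℝ (U s a) ∧
      U s a ⊆ stdSimplex ℝ S)
    (V₁ V₂ : S → ℝ) :
    ∃ pstar : S → A → (S → ℝ),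
      (∀ s a, pstar s a ∈ U s a) ∧
      (∀ s a, suppF (U s a) V₁ - suppF (U s a) V₂
        = ∑ s', pstar s a s' * (V₁ s' - V₂ s')) ∧
      (∀ π : S → A → ℝ, (∀ s, π s ∈ stdSimplex ℝ A) → ∀ s,
        (∑ a, π s a * suppF (U s a) V₁) - (∑ a, π s a * suppF (U s a) V₂)
          = ∑ s', (∑ a, π s a * pstar s a s') * (V₁ s' - V₂ s')) :=
  stmt18_general U hU V₁ V₂
end
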